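/- (Graph-state measurement probabilities, Eq. (S31).) Let G be a finite simple graph on a finite vertex set V with |V| = N, and define the graph state g : (V → ZMod 2) → ℂ by g(z) = 2^(−N/2) · ∏_{edges {i,j} of G} (−1)^(z(i)·z(j)), where z(i)·z(j) is computed via representatives in {0,1}. Let S ⊆ V be an independent set of G, let y : V → ZMod 2 assign computational-basis outcomes to the vertices outside S, and let s : V → {+1, −1} assign signs to the vertices in S. Define the product measurement vector w : (V → ZMod 2) → ℂ by w(z) = 2^(−|S|/2) · (∏_{n ∉ S} [z(n) = y(n)]) · (∏_{n ∈ S} s(n)^(z(n))), where [·] is the indicator and s(n)^(z(n)) uses the {0,1}-representative of z(n). Then |⟨w, g⟩|² = 2^(−(N−|S|)) if for every n ∈ S one has s(n) = (−1)^(Σ_{j adjacent to n} y(j)) (the exponent computed via {0,1}-representatives), and |⟨w, g⟩|² = 0 otherwise. -/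

import Mathlib

open scoped Classical ComplexInnerProductSpace

/-- The graph state of a finite simple graph `G` on vertex set `V` (with `N = |V|`):
`g z = 2^(−N/2) ∏_{{i,j} ∈ E(G)} (−1)^(z i · z j)`, exponents computed via the
`{0,1}`-representatives of `ZMod 2`. -/
noncomputable def graphState {V : Type*} [Fintype V] (G : SimpleGraph V) :
    EuclideanSpace ℂ (V → ZMod 2) := WithLp.toLp 2 fun z =>
  ((Real.sqrt (2 ^ Fintype.card V) : ℝ) : ℂ)⁻¹ *
    ∏ e ∈ G.edgeFinset,
      Sym2.lift ⟨fun i j => (-1 : ℂ) ^ ((z i).val * (z j).val),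
        fun i j => by simp [mul_comm]⟩ e

noncomputable def efunAux {V : Type*} (z : V → ZMod 2) : Sym2 V → ℂ :=
  Sym2.lift ⟨fun i j => (-1 : ℂ) ^ ((z i).val * (z j).val), fun i j => by simp [mul_comm]⟩

lemma edge_split_aux {V : Type*} [Fintype V] (G : SimpleGraph V)
    (S : Finset V) (hS : ∀ i ∈ S, ∀ j ∈ S, ¬ G.Adj i j)
    (y : V → ZMod 2) (z : V → ZMod 2) (hz : ∀ n ∉ S, z n = y n) :
    ∏ e ∈ G.edgeFinset, efunAux z e
      = (∏ e ∈ G.edgeFinset.filter (fun e => ∀ n ∈ S, n ∉ e), efunAux y e) *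
        ∏ n ∈ S, ((-1:ℂ) ^ (∑ j ∈ G.neighborFinset n, (y j).val)) ^ (z n).val := by
  rw [← Finset.prod_filter_mul_prod_filter_not G.edgeFinset (fun e => ∀ n ∈ S, n ∉ e)]
  congr 1
  · refine Finset.prod_congr rfl fun e he => ?_
    simp only [Finset.mem_filter] at he
    obtain ⟨-, he2⟩ := he
    induction e using Sym2.ind with
    | _ i j =>
      have hi : i ∉ S := fun h => he2 i h (by simp)
      have hj : j ∉ S := fun h => he2 j h (by simp)
      simp [efunAux, hz i hi, hz j hj]
  · have key : ∏ p ∈ S.sigma (fun n => G.neighborFinset n),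
        ((-1:ℂ) ^ ((z p.1).val * (y p.2).val))
        = ∏ e ∈ G.edgeFinset.filter (fun e => ¬ ∀ n ∈ S, n ∉ e), efunAux z e := by
      refine Finset.prod_bij (fun p _ => s(p.1, p.2)) ?_ ?_ ?_ ?_
      · rintro ⟨n, j⟩ hp
        simp only [Finset.mem_sigma, SimpleGraph.mem_neighborFinset] at hp
        simp only [Finset.mem_filter, SimpleGraph.mem_edgeFinset, SimpleGraph.mem_edgeSet]
        refine ⟨hp.2, ?_⟩
        push_neg
        exact ⟨n, hp.1, by simp⟩
      · rintro ⟨n, j⟩ hp ⟨n', j'⟩ hp' h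
        simp only [Finset.mem_sigma, SimpleGraph.mem_neighborFinset] at hp hp'
        rw [Sym2.eq_iff] at h
        dsimp only at h
        rcases h with ⟨h1, h2⟩ | ⟨h1, h2⟩
        · exact Sigma.ext h1 (heq_of_eq h2)
        · subst h1; subst h2
          exact absurd hp.2 (hS _ hp.1 _ hp'.1)
      · intro e he
        simp only [Finset.mem_filter, SimpleGraph.mem_edgeFinset] at he
        obtain ⟨he1, he2⟩ := he
        push_neg at he2
        obtain ⟨n, hn, hne⟩ := he2
        induction e using Sym2.ind with
        | _ a b =>
          have hadj : G.Adj a b := he1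
          rcases Sym2.mem_iff.mp hne with rfl | rfl
          · exact ⟨⟨n, b⟩, by simp [Finset.mem_sigma, SimpleGraph.mem_neighborFinset, hn, hadj]⟩
          · exact ⟨⟨n, a⟩, by simp [Finset.mem_sigma, SimpleGraph.mem_neighborFinset, hn, hadj.symm],
              Sym2.eq_swap⟩
      · rintro ⟨n, j⟩ hp
        simp only [Finset.mem_sigma, SimpleGraph.mem_neighborFinset] at hp
        have hjS : j ∉ S := fun h => hS n hp.1 j h hp.2
        simp [efunAux, hz j hjS]
    rw [← key, Finset.prod_sigma]
    refine Finset.prod_congr rfl fun n hn => ?_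
    dsimp only
    rw [Finset.prod_pow_eq_pow_sum, ← Finset.mul_sum, mul_comm ((z n).val), pow_mul]

lemma sum_restricted_aux {V : Type*} [Fintype V] (S : Finset V) (y : V → ZMod 2) (t : V → ℂ) :
    ∑ z ∈ Finset.univ.filter (fun z : V → ZMod 2 => ∀ n ∉ S, z n = y n),
      ∏ n ∈ S, t n ^ (z n).val = ∏ n ∈ S, (1 + t n) := by
  have h1 : ∏ n ∈ S, (1 + t n) = ∑ T ∈ S.powerset, ∏ n ∈ T, t n := by
    simp_rw [add_comm (1:ℂ)]
    rw [Finset.prod_add]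
    simp
  rw [h1]
  refine Finset.sum_nbij' (i := fun z => S.filter (fun n => z n = 1))
    (j := fun T => fun n => if n ∈ T then 1 else if n ∈ S then 0 else y n) ?_ ?_ ?_ ?_ ?_
  · intro z hz
    simp [Finset.mem_powerset, Finset.filter_subset]
  · intro T hT
    simp only [Finset.mem_powerset] at hT
    simp only [Finset.mem_filter, Finset.mem_univ, true_and]
    intro n hn
    rw [if_neg (fun h => hn (hT h)), if_neg hn]
  · intro z hz
    simp only [Finset.mem_filter, Finset.mem_univ, true_and] at hz
    funext n
    by_cases h1 : n ∈ S.filter (fun n => z n = 1)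
    · simp only [Finset.mem_filter] at h1
      rw [if_pos, h1.2]
      exact Finset.mem_filter.mpr h1
    · rw [if_neg h1]
      simp only [Finset.mem_filter, not_and] at h1
      by_cases h2 : n ∈ S
      · rw [if_pos h2]
        have := h1 h2
        revert this
        generalize z n = a
        revert a; decide
      · rw [if_neg h2, hz n h2]
  · intro T hT
    simp only [Finset.mem_powerset] at hT
    ext n
    simp only [Finset.mem_filter]
    constructor
    · rintro ⟨hnS, h⟩
      by_cases hnT : n ∈ T
      · exact hnT
      · exfalso; rw [if_neg hnT, if_pos hnS] at h; exact one_ne_zero h.symm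
    · intro hnT
      exact ⟨hT hnT, by rw [if_pos hnT]⟩
  · intro z hz
    simp only [Finset.mem_filter, Finset.mem_univ, true_and] at hz
    rw [← Finset.prod_filter_mul_prod_filter_not S (fun n => z n = 1)]
    have h2 : ∏ n ∈ S.filter (fun n => ¬ z n = 1), t n ^ (z n).val = 1 := by
      refine Finset.prod_eq_one fun n hn => ?_
      simp only [Finset.mem_filter] at hn
      have : z n = 0 := by
        have := hn.2; revert this; generalize z n = a; revert a; decide
      simp [this]
    rw [h2, mul_one]
    refine Finset.prod_congr rfl fun n hn => ?_
    simp only [Finset.mem_filter] at hn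
    rw [hn.2, show (1 : ZMod 2).val = 1 from rfl, pow_one]

/-- **Eq. (S31).** Let `S` be an independent set of `G`, let `y` assign
computational-basis outcomes to the vertices outside `S` and let `s` assign signs (`±1`) to
those in `S`. For the product measurement vector
`w z = 2^(−|S|/2) (∏_{n ∉ S} [z n = y n]) (∏_{n ∈ S} (s n)^(z n))`, the squared overlap
with the graph state equals `2^{−(N−|S|)}` if `s n = (−1)^(Σ_{j ∼ n} y j)` for every
`n ∈ S`, and `0` otherwise. -/
theorem graph_state_measurement_prob (V : Type*) [Fintype V] (G : SimpleGraph V)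
    (N : ℕ) (hN : Fintype.card V = N)
    (S : Finset V) (hS : ∀ i ∈ S, ∀ j ∈ S, ¬ G.Adj i j)
    (y : V → ZMod 2) (s : V → ℤ) (hs : ∀ n, s n = 1 ∨ s n = -1)
    (w : EuclideanSpace ℂ (V → ZMod 2))
    (hw : ∀ z : V → ZMod 2, w z =
      ((Real.sqrt (2 ^ S.card) : ℝ) : ℂ)⁻¹ *
        (∏ n ∈ Sᶜ, if z n = y n then (1 : ℂ) else 0) *
        ∏ n ∈ S, (s n : ℂ) ^ (z n).val) :
    ‖⟪w, graphState G⟫‖ ^ 2 =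
      if ∀ n ∈ S, s n = (-1) ^ (∑ j ∈ G.neighborFinset n, (y j).val)
      then ((2 : ℝ) ^ (N - S.card))⁻¹ else 0 := by
  classical
  subst hN
  set A : ℝ := Real.sqrt (2 ^ S.card) with hA
  set B : ℝ := Real.sqrt (2 ^ Fintype.card V) with hB
  set r : V → ℂ := fun n => (-1:ℂ) ^ (∑ j ∈ G.neighborFinset n, (y j).val) with hr
  set t : V → ℂ := fun n => (s n : ℂ) * r n with ht
  set c : ℂ := ∏ e ∈ G.edgeFinset.filter (fun e => ∀ n ∈ S, n ∉ e), efunAux y e with hc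
  have hcnorm : ‖c‖ = 1 := by
    rw [hc, norm_prod]
    refine Finset.prod_eq_one fun e he => ?_
    induction e using Sym2.ind with
    | _ i j => simp [efunAux]
  have hinner : ⟪w, graphState G⟫ = (A:ℂ)⁻¹ * (B:ℂ)⁻¹ * c * ∏ n ∈ S, (1 + t n) := by
    rw [PiLp.inner_apply]
    simp only [RCLike.inner_apply, mul_comm ((graphState G).ofLp _)]
    rw [← Finset.sum_filter_add_sum_filter_not Finset.univ
      (fun z : V → ZMod 2 => ∀ n ∉ S, z n = y n)]
    have hzero : ∑ z ∈ Finset.univ.filter (fun z : V → ZMod 2 => ¬ ∀ n ∉ S, z n = y n),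
        (starRingEnd ℂ) (w z) * graphState G z = 0 := by
      refine Finset.sum_eq_zero fun z hz => ?_
      simp only [Finset.mem_filter, Finset.mem_univ, true_and] at hz
      push_neg at hz
      obtain ⟨n, hn, hne⟩ := hz
      have hwz : w z = 0 := by
        rw [hw z, Finset.prod_eq_zero (Finset.mem_compl.mpr hn) (by simp [hne])]
        ring
      simp [hwz]
    rw [hzero, add_zero]
    have hterm : ∀ z ∈ Finset.univ.filter (fun z : V → ZMod 2 => ∀ n ∉ S, z n = y n),
        (starRingEnd ℂ) (w z) * graphState G z
          = (A:ℂ)⁻¹ * (B:ℂ)⁻¹ * c * ∏ n ∈ S, t n ^ (z n).val := by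
      intro z hz
      simp only [Finset.mem_filter, Finset.mem_univ, true_and] at hz
      have hw1 : w z = (A:ℂ)⁻¹ * ∏ n ∈ S, (s n : ℂ) ^ (z n).val := by
        rw [hw z,
          Finset.prod_eq_one (fun n hn => by rw [if_pos (hz n (Finset.mem_compl.mp hn))]),
          mul_one]
      have hg : graphState G z = (B:ℂ)⁻¹ * (c * ∏ n ∈ S, (r n) ^ (z n).val) := by
        show (B:ℂ)⁻¹ * ∏ e ∈ G.edgeFinset, efunAux z e = _
        rw [edge_split_aux G S hS y z hz]
      have hsplit : ∏ n ∈ S, t n ^ (z n).val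
          = (∏ n ∈ S, (s n:ℂ) ^ (z n).val) * ∏ n ∈ S, r n ^ (z n).val := by
        rw [← Finset.prod_mul_distrib]
        exact Finset.prod_congr rfl fun n _ => mul_pow _ _ _
      rw [hw1, hg, map_mul, map_inv₀, Complex.conj_ofReal, map_prod]
      simp only [map_pow, map_intCast]
      rw [hsplit]; ring
    rw [Finset.sum_congr rfl hterm, ← Finset.mul_sum, sum_restricted_aux S y t]
  by_cases hcase : ∀ n ∈ S, s n = (-1) ^ (∑ j ∈ G.neighborFinset n, (y j).val)
  · rw [if_pos hcase]
    have hprod : ∏ n ∈ S, (1 + t n) = (2:ℂ) ^ S.card := by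
      rw [Finset.prod_congr rfl (fun n hn => ?_), Finset.prod_const]
      have h1 : t n = 1 := by
        rw [ht]; dsimp only; rw [hr]; dsimp only
        push_cast [hcase n hn]
        rw [← mul_pow]; norm_num
      rw [h1]; norm_num
    rw [hinner, hprod]
    rw [norm_mul, norm_mul, norm_mul, hcnorm, mul_one]
    simp only [norm_inv, Complex.norm_real, norm_pow, Complex.norm_ofNat,
      Real.norm_eq_abs]
    have hA0 : (0:ℝ) < A := Real.sqrt_pos.mpr (by positivity)
    have hB0 : (0:ℝ) < B := Real.sqrt_pos.mpr (by positivity)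
    rw [abs_of_pos hA0, abs_of_pos hB0]
    have hAsq : A ^ 2 = 2 ^ S.card := Real.sq_sqrt (by positivity)
    have hBsq : B ^ 2 = 2 ^ Fintype.card V := Real.sq_sqrt (by positivity)
    have hle : S.card ≤ Fintype.card V := Finset.card_le_univ S
    have h2 : (2:ℝ) ^ (Fintype.card V - S.card) = 2 ^ (Fintype.card V) / 2 ^ S.card := by
      rw [eq_div_iff (by positivity), ← pow_add, Nat.sub_add_cancel hle]
    rw [h2, inv_div]
    rw [mul_pow, mul_pow, inv_pow, inv_pow, hAsq, hBsq]
    field_simp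
  · rw [if_neg hcase]
    push_neg at hcase
    obtain ⟨n, hn, hne⟩ := hcase
    have hsn : s n = -((-1:ℤ) ^ (∑ j ∈ G.neighborFinset n, (y j).val)) := by
      rcases hs n with h | h <;>
        rcases neg_one_pow_eq_or ℤ (∑ j ∈ G.neighborFinset n, (y j).val) with h2 | h2 <;>
        rw [h, h2] at hne ⊢ <;> omega
    have h1 : 1 + t n = 0 := by
      rw [ht]; dsimp only; rw [hr]; dsimp only
      push_cast [hsn]
      rw [neg_mul, ← mul_pow]; norm_num
    rw [hinner, Finset.prod_eq_zero hn h1]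
    simp
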